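/- For random points, the spherical cap discrepancy of N i.i.d. uniformly distributed points on S² satisfies the lower moment bound E[D(Z_N)²] ≥ 1/(6N). -/

import Mathlib

open MeasureTheory Metric
open scoped Classical RealInnerProductSpace

/-- Normalised surface measure on the unit sphere `S² ⊂ ℝ³`. -/
noncomputable def sigmaSphere : Measure (sphere (0 : EuclideanSpace ℝ (Fin 3)) 1) :=
  ((volume : Measure (EuclideanSpace ℝ (Fin 3))).toSphere Set.univ)⁻¹ •
    (volume : Measure (EuclideanSpace ℝ (Fin 3))).toSphere

/-- The spherical cap discrepancy of a configuration of `N` points on `S²`. -/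
noncomputable def sphCapDisc (N : ℕ) (X : Fin N → sphere (0 : EuclideanSpace ℝ (Fin 3)) 1) : ℝ :=
  ⨆ c : {c : EuclideanSpace ℝ (Fin 3) × ℝ // ‖c.1‖ = 1 ∧ c.2 ∈ Set.Icc (-1 : ℝ) 1},
    |(∑ n, if c.val.2 < ⟪c.val.1, (X n : EuclideanSpace ℝ (Fin 3))⟫ then (1 : ℝ) else 0) / N -
      (sigmaSphere {y : sphere (0 : EuclideanSpace ℝ (Fin 3)) 1 |
        c.val.2 < ⟪c.val.1, (y : EuclideanSpace ℝ (Fin 3))⟫}).toReal|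

/-!
The discrepancy dominates the deviation on the single hemisphere `{y | 0 < y₀}`. The number of
points in it is binomial with parameter `σ = 1/2`, so the mean square of that deviation is
`(1/2)(1 - 1/2)/N = 1/(4N) ≥ 1/(6N)`. The only delicate point is that `D` is measurable at all
(else its integral would be the junk value `0`): the supremum over all caps equals the supremum
over a countable dense family of caps, because raising the threshold of a cap slightly and tilting
its axis a little moves no point across its boundary and, by rotation invariance and right
continuity of `t ↦ σ {y | t < ⟪w, y⟫}`, costs little mass.
-/

open Filter Topology Set ProbabilityTheory

lemma tendsto_measureReal_lt_nhdsGT {α : Type*} [MeasurableSpace α] (μ : Measure α)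
    [IsProbabilityMeasure μ] {f : α → ℝ} (hf : Measurable f) (t : ℝ) :
    Tendsto (fun s => μ.real {y | s < f y}) (𝓝[>] t) (𝓝 (μ.real {y | t < f y})) := by
  have := Measure.isProbabilityMeasure_map (μ := μ) hf.aemeasurable
  have hcdf : ∀ s, μ.real {y | s < f y} = 1 - cdf (μ.map f) s := by
    intro s
    rw [cdf_eq_real, map_measureReal_apply hf measurableSet_Iic, ← probReal_compl_eq_one_sub
      (hf measurableSet_Iic)]
    congr 1
    ext y
    simp
  simp_rw [hcdf]
  exact ((cdf _).right_continuous t).mono Ioi_subset_Ici_self |>.tendsto.const_sub 1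

lemma iSup_subtype_eq_iSup_of_dense {α : Type*} [TopologicalSpace α] [Nonempty α] {f : α → ℝ}
    (hf : BddAbove (range f)) {s : Set α} (hs : Dense s)
    (hopen : ∀ a, ∀ ε > 0, ∃ U, IsOpen U ∧ U.Nonempty ∧ ∀ b ∈ U, f a - ε ≤ f b) :
    ⨆ b : s, f b = ⨆ a, f a := by
  have := hs.nonempty.to_subtype
  refine le_antisymm (ciSup_le fun b => le_ciSup hf b) (ciSup_le fun a => ?_)
  refine le_of_forall_pos_le_add fun ε hε => ?_
  obtain ⟨U, hU, hUne, hfU⟩ := hopen a ε hε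
  obtain ⟨b, hbU, hbs⟩ := hs.inter_open_nonempty U hU hUne
  have hfs : BddAbove (range fun b : s => f b) := hf.mono (range_comp_subset_range _ f)
  have := le_ciSup hfs ⟨b, hbs⟩
  linarith [hfU b hbU]

lemma integral_sq_sum_pi_eq {ι Ω : Type*} [Fintype ι] [MeasurableSpace Ω] (μ : Measure Ω)
    [IsProbabilityMeasure μ] {g : Ω → ℝ} (hg : MemLp g 2 μ) (hg₀ : ∫ y, g y ∂μ = 0) :
    ∫ X, (∑ i, g (X i)) ^ 2 ∂(Measure.pi fun _ : ι => μ) = Fintype.card ι * ∫ y, g y ^ 2 ∂μ := by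
  have hgi : ∀ i, MemLp (fun X : ι → Ω => g (X i)) 2 (Measure.pi fun _ => μ) := fun i =>
    hg.comp_measurePreserving (measurePreserving_eval _ i)
  have hmean : ∫ X, ∑ i, g (X i) ∂(Measure.pi fun _ : ι => μ) = 0 := by
    rw [integral_finsetSum _ fun i _ => (hgi i).integrable one_le_two]
    exact Finset.sum_eq_zero fun i _ =>
      (integral_comp_eval (μ := fun _ : ι => μ) hg.aestronglyMeasurable).trans hg₀
  have hsum : (fun X : ι → Ω => ∑ i, g (X i)) = ∑ i, fun X => g (X i) := by
    ext X
    simp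
  rw [← variance_of_integral_eq_zero (memLp_finsetSum _ fun i _ => hgi i).aemeasurable hmean,
    hsum, variance_sum_pi fun _ => hg, variance_of_integral_eq_zero hg.aemeasurable hg₀]
  simp

lemma integral_sq_empirical_sub_eq {Ω : Type*} [MeasurableSpace Ω] (μ : Measure Ω)
    [IsProbabilityMeasure μ] {A : Set Ω} (hA : MeasurableSet A) {N : ℕ} (hN : 0 < N) :
    ∫ X, ((∑ n : Fin N, A.indicator 1 (X n)) / N - μ.real A) ^ 2 ∂(Measure.pi fun _ => μ) =
      μ.real A * (1 - μ.real A) / N := by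
  set p := μ.real A
  set g : Ω → ℝ := fun y => A.indicator 1 y - p
  have hg : MemLp g 2 μ := (memLp_indicator_const 2 hA 1 (.inr (measure_ne_top _ _))).sub
    (memLp_const p)
  have hind : Integrable (A.indicator (1 : Ω → ℝ)) μ := (integrable_const 1).indicator hA
  have hg₀ : ∫ y, g y ∂μ = 0 := by
    rw [integral_sub hind (integrable_const p), integral_indicator_one hA]
    simp [p]
  have hg_sq : ∀ y, g y ^ 2 = (1 - 2 * p) * A.indicator (1 : Ω → ℝ) y + p ^ 2 := fun y => by
    by_cases hy : y ∈ A
    · simp [g, hy]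
      ring
    · simp [g, hy]
  have hvar : ∫ y, g y ^ 2 ∂μ = p * (1 - p) := by
    simp_rw [hg_sq]
    rw [integral_add (hind.const_mul _) (integrable_const _), integral_const_mul,
      integral_indicator_one hA]
    simp only [integral_const, probReal_univ, smul_eq_mul, one_mul]
    ring
  have hN' : (N : ℝ) ≠ 0 := by positivity
  have hsum : ∀ X : Fin N → Ω,
      ((∑ n, A.indicator 1 (X n)) / N - p) ^ 2 = (∑ n, g (X n)) ^ 2 / N ^ 2 := fun X => by
    simp only [g, Finset.sum_sub_distrib, Finset.sum_const, Finset.card_univ, Fintype.card_fin,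
      nsmul_eq_mul]
    field_simp
  simp_rw [hsum]
  rw [integral_div, integral_sq_sum_pi_eq μ hg hg₀, hvar, Fintype.card_fin]
  field_simp

section Cap

variable {E : Type*} [NormedAddCommGroup E] [InnerProductSpace ℝ E]

def cap (w : E) (t : ℝ) : Set (sphere (0 : E) 1) :=
  {y | t < ⟪w, (y : E)⟫}

lemma cap_antitone (w : E) : Antitone (cap w) :=
  fun _ _ hst _ hy => hst.trans_lt hy

lemma cap_eq_empty {w : E} {t : ℝ} (h : ‖w‖ ≤ t) : cap w t = ∅ := by
  refine eq_empty_of_forall_notMem fun y hy => ?_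
  have := real_inner_le_norm w (y : E)
  rw [norm_eq_of_mem_sphere y, mul_one] at this
  exact (this.trans h).not_gt hy

lemma lt_inner_iff_of_norm_sub_lt {w w' x : E} {t t' r : ℝ} (hx : ‖x‖ ≤ 1)
    (hw : ‖w' - w‖ < r) (ht : t + r ≤ t') (hgap : t < ⟪w, x⟫ → t' + r ≤ ⟪w, x⟫) :
    t' < ⟪w', x⟫ ↔ t < ⟪w, x⟫ := by
  have hclose : |⟪w', x⟫ - ⟪w, x⟫| < r := by
    rw [← inner_sub_left]
    exact (abs_real_inner_le_norm _ _).trans_lt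
      ((mul_le_of_le_one_right (norm_nonneg _) hx).trans_lt hw)
  obtain ⟨h₁, h₂⟩ := abs_lt.mp hclose
  constructor
  · intro h
    by_contra! hle
    linarith
  · intro h
    linarith [hgap h]

variable [MeasurableSpace E] [BorelSpace E]

lemma measurableSet_cap (w : E) (t : ℝ) : MeasurableSet (cap w t) :=
  measurableSet_lt measurable_const (by fun_prop)

lemma toSphere_cap_linearIsometryEquiv [FiniteDimensional ℝ E] (R : E ≃ₗᵢ[ℝ] E) (w : E) (t : ℝ) :
    (volume : Measure E).toSphere (cap (R w) t) = (volume : Measure E).toSphere (cap w t) := by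
  have himage : ((↑) '' cap (R w) t : Set E) = R '' ((↑) '' cap w t) := by
    ext x
    constructor
    · rintro ⟨y, hy, rfl⟩
      refine ⟨R.symm y, ⟨⟨R.symm y, ?_⟩, ?_, rfl⟩, R.apply_symm_apply _⟩
      · simp
      · change t < ⟪w, R.symm y⟫
        rwa [← R.inner_map_map, R.apply_symm_apply]
    · rintro ⟨_, ⟨y, hy, rfl⟩, rfl⟩
      refine ⟨⟨R y, ?_⟩, ?_, rfl⟩
      · simp
      · change t < ⟪R w, R y⟫
        rwa [R.inner_map_map]
  rw [Measure.toSphere_apply' _ (measurableSet_cap _ _),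
    Measure.toSphere_apply' _ (measurableSet_cap _ _), himage, ← image2_smul,
    ← image_image2_distrib_right R.map_smul, R.image_eq_preimage_symm,
    R.symm.measurePreserving.measure_preimage_emb R.symm.toHomeomorph.measurableEmbedding,
    image2_smul]

lemma toSphere_inner_eq_zero [FiniteDimensional ℝ E] (μ : Measure E) [μ.IsAddHaarMeasure]
    {w : E} (hw : w ≠ 0) : μ.toSphere {y | ⟪w, (y : E)⟫ = 0} = 0 := by
  have hne : (ℝ ∙ w)ᗮ ≠ ⊤ := by
    simpa [Submodule.orthogonal_eq_top_iff] using hw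
  rw [Measure.toSphere_apply' _ (measurableSet_eq_fun (by fun_prop) measurable_const),
    measure_mono_null _ (Measure.addHaar_submodule μ _ hne), mul_zero]
  rintro _ ⟨r, -, _, ⟨y, hy, rfl⟩, rfl⟩
  simp_all [Submodule.mem_orthogonal_singleton_iff_inner_right, real_inner_smul_right]

end Cap

local notation "ℝ³" => EuclideanSpace ℝ (Fin 3)
local notation "S²" => sphere (0 : ℝ³) 1

instance : IsProbabilityMeasure sigmaSphere := by
  constructor
  rw [sigmaSphere, Measure.smul_apply, smul_eq_mul]
  exact ENNReal.inv_mul_cancel (Measure.measure_univ_ne_zero.mpr (Measure.toSphere_ne_zero _))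
    (measure_ne_top _ _)

lemma sigmaSphere_cap_eq {w w' : ℝ³} (h : ‖w‖ = ‖w'‖) (t : ℝ) :
    sigmaSphere (cap w t) = sigmaSphere (cap w' t) := by
  have hR := Submodule.reflection_sub h
  rw [sigmaSphere, Measure.smul_apply, Measure.smul_apply, ← hR,
    toSphere_cap_linearIsometryEquiv]

lemma sigmaSphere_real_cap_zero {w : ℝ³} (hw : w ≠ 0) : sigmaSphere.real (cap w 0) = 1 / 2 := by
  have hequator : sigmaSphere {y | ⟪w, (y : ℝ³)⟫ = 0} = 0 := by
    rw [sigmaSphere, Measure.smul_apply, toSphere_inner_eq_zero _ hw, smul_zero]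
  have hunion : cap w 0 ∪ cap (-w) 0 = ({y | ⟪w, (y : ℝ³)⟫ = 0}ᶜ : Set S²) := by
    ext y
    simp only [cap, mem_union, mem_ofPred_eq, mem_compl_iff, inner_neg_left]
    constructor
    · rintro (h | h) <;> intro h0 <;> linarith
    · exact fun h => (lt_or_gt_of_ne h).symm.imp id neg_pos.mpr
  have hdisj : Disjoint (cap w 0) (cap (-w) 0) :=
    disjoint_left.mpr fun y (h : 0 < ⟪w, (y : ℝ³)⟫) (h' : 0 < ⟪-w, (y : ℝ³)⟫) => by
      rw [inner_neg_left] at h'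
      linarith
  have hneg : sigmaSphere.real (cap (-w) 0) = sigmaSphere.real (cap w 0) := by
    rw [measureReal_def, measureReal_def, sigmaSphere_cap_eq (norm_neg w)]
  have hsum := measureReal_union hdisj (measurableSet_cap (-w) 0) (μ := sigmaSphere)
  rw [hunion, probReal_compl_eq_one_sub (measurableSet_eq_fun (by fun_prop) measurable_const),
    measureReal_def, hequator, hneg, ENNReal.toReal_zero] at hsum
  linarith

abbrev CapParam := {c : ℝ³ × ℝ // ‖c.1‖ = 1 ∧ c.2 ∈ Icc (-1 : ℝ) 1}

noncomputable def capDisc (N : ℕ) (c : CapParam) (X : Fin N → S²) : ℝ :=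
  |(∑ n, if c.1.2 < ⟪c.1.1, (X n : ℝ³)⟫ then (1 : ℝ) else 0) / N - sigmaSphere.real (cap c.1.1 c.1.2)|

lemma sphCapDisc_eq_iSup (N : ℕ) (X : Fin N → S²) :
    sphCapDisc N X = ⨆ c : CapParam, capDisc N c X := rfl

lemma capDisc_le_one (N : ℕ) (c : CapParam) (X : Fin N → S²) : capDisc N c X ≤ 1 := by
  have hcount : (∑ n, if c.1.2 < ⟪c.1.1, (X n : ℝ³)⟫ then (1 : ℝ) else 0) ≤ N := by
    calc _ ≤ ∑ _n : Fin N, (1 : ℝ) := Finset.sum_le_sum fun n _ => by split_ifs <;> norm_num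
      _ = N := by simp
  refine abs_sub_le_of_nonneg_of_le (by positivity) (div_le_one_of_le₀ hcount N.cast_nonneg)
    measureReal_nonneg measureReal_le_one

lemma bddAbove_range_capDisc (N : ℕ) (X : Fin N → S²) :
    BddAbove (range fun c => capDisc N c X) :=
  ⟨1, forall_mem_range.mpr fun c => capDisc_le_one N c X⟩

lemma capDisc_le_sphCapDisc (N : ℕ) (c : CapParam) (X : Fin N → S²) :
    capDisc N c X ≤ sphCapDisc N X :=
  le_ciSup (bddAbove_range_capDisc N X) c

lemma capDisc_nonneg (N : ℕ) (c : CapParam) (X : Fin N → S²) : 0 ≤ capDisc N c X :=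
  abs_nonneg _

noncomputable def hemisphere : CapParam :=
  ⟨(EuclideanSpace.single 0 1, 0), by simp, by norm_num⟩

instance : Nonempty CapParam :=
  ⟨hemisphere⟩

lemma sphCapDisc_nonneg (N : ℕ) (X : Fin N → S²) : 0 ≤ sphCapDisc N X :=
  (capDisc_nonneg N hemisphere X).trans (capDisc_le_sphCapDisc N hemisphere X)

lemma sphCapDisc_le_one (N : ℕ) (X : Fin N → S²) : sphCapDisc N X ≤ 1 :=
  ciSup_le fun c => capDisc_le_one N c X

lemma measurable_capDisc (N : ℕ) (c : CapParam) : Measurable (capDisc N c) := by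
  refine ((Finset.measurable_sum _ fun n _ => ?_).div_const _ |>.sub_const _).abs
  exact Measurable.ite ((measurableSet_cap _ _).preimage (measurable_pi_apply n))
    measurable_const measurable_const

lemma exists_isOpen_forall_capDisc_ge (N : ℕ) (X : Fin N → S²) (c : CapParam) {ε : ℝ}
    (hε : 0 < ε) : ∃ U : Set CapParam, IsOpen U ∧ U.Nonempty ∧
      ∀ c' ∈ U, capDisc N c X - ε ≤ capDisc N c' X := by
  obtain ⟨⟨w, t⟩, hw, ht⟩ := c
  obtain rfl | ht₁ := ht.2.eq_or_lt
  · refine ⟨univ, isOpen_univ, univ_nonempty, fun c' _ => ?_⟩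
    have hempty : cap w 1 = ∅ := cap_eq_empty hw.le
    have hout : ∀ n, ¬ 1 < ⟪w, (X n : ℝ³)⟫ := fun n h => (hempty ▸ h : X n ∈ (∅ : Set S²))
    have hzero : capDisc N ⟨(w, 1), hw, ht⟩ X = 0 := by simp [capDisc, hempty, hout]
    linarith [capDisc_nonneg N c' X]
  -- raising the threshold to `s` moves no point out of the cap and loses little mass
  have hev : ∀ᶠ s in 𝓝[>] t, s ∈ Ioo t 1 ∧
      (∀ n, t < ⟪w, (X n : ℝ³)⟫ → s < ⟪w, (X n : ℝ³)⟫) ∧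
      sigmaSphere.real (cap w t) - ε < sigmaSphere.real (cap w s) := by
    refine Eventually.and (Ioo_mem_nhdsGT ht₁) (Eventually.and (eventually_all.mpr fun n => ?_)
      ((tendsto_measureReal_lt_nhdsGT sigmaSphere (by fun_prop) t).eventually
        (lt_mem_nhds (sub_lt_self _ hε))))
    by_cases h : t < ⟪w, (X n : ℝ³)⟫
    · filter_upwards [Ioo_mem_nhdsGT h] with s hs using fun _ => hs.2
    · exact Eventually.of_forall fun s h' => absurd h' h
  obtain ⟨s, ⟨hts, hs₁⟩, hgap, hmass⟩ := hev.exists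
  set δ := s - t
  refine ⟨{c' | ‖c'.1.1 - w‖ < δ / 4 ∧ t + δ / 4 < c'.1.2 ∧ c'.1.2 < t + δ / 2}, ?_, ?_, ?_⟩
  · refine (isOpen_lt ?_ ?_).and ((isOpen_lt ?_ ?_).and (isOpen_lt ?_ ?_)) <;> fun_prop
  · refine ⟨⟨(w, t + 3 * δ / 8), hw, ?_, ?_⟩, ?_⟩
    · linarith [ht.1]
    · linarith
    · simp only [mem_ofPred_eq, sub_self, norm_zero]
      refine ⟨?_, ?_, ?_⟩ <;> linarith
  · rintro ⟨⟨w', t'⟩, hw', ht'⟩ ⟨hww, hlo, hhi⟩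
    have hcount : ∀ n, t' < ⟪w', (X n : ℝ³)⟫ ↔ t < ⟪w, (X n : ℝ³)⟫ := fun n =>
      lt_inner_iff_of_norm_sub_lt (norm_eq_of_mem_sphere (X n)).le hww hlo.le
        fun h => by linarith [hgap n h]
    have hcap : sigmaSphere.real (cap w' t') = sigmaSphere.real (cap w t') := by
      rw [measureReal_def, measureReal_def, sigmaSphere_cap_eq (hw'.trans hw.symm)]
    have hlower : sigmaSphere.real (cap w s) ≤ sigmaSphere.real (cap w t') :=
      measureReal_mono (cap_antitone w (by linarith))
    have hupper : sigmaSphere.real (cap w t') ≤ sigmaSphere.real (cap w t) :=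
      measureReal_mono (cap_antitone w (by linarith))
    simp only [capDisc, Finset.sum_congr rfl fun n _ => if_congr (hcount n) rfl rfl, hcap]
    have hclose : |sigmaSphere.real (cap w t') - sigmaSphere.real (cap w t)| ≤ ε :=
      abs_le.mpr ⟨by linarith, by linarith⟩
    linarith [abs_sub_le ((∑ n, if t < ⟪w, (X n : ℝ³)⟫ then (1 : ℝ) else 0) / N)
      (sigmaSphere.real (cap w t')) (sigmaSphere.real (cap w t))]

lemma measurable_sphCapDisc (N : ℕ) : Measurable (sphCapDisc N) := by
  obtain ⟨s, hs, hsd⟩ := TopologicalSpace.exists_countable_dense CapParam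
  have := hs.to_subtype
  have hsup : sphCapDisc N = fun X => ⨆ c : s, capDisc N c X := by
    ext X
    rw [sphCapDisc_eq_iSup, iSup_subtype_eq_iSup_of_dense (bddAbove_range_capDisc N X) hsd
      fun c ε hε => exists_isOpen_forall_capDisc_ge N X c hε]
  rw [hsup]
  exact Measurable.iSup fun c => measurable_capDisc N c

lemma integrable_sphCapDisc_sq (N : ℕ) (μ : Measure (Fin N → S²)) [IsFiniteMeasure μ] :
    Integrable (fun X => sphCapDisc N X ^ 2) μ := by
  refine .of_bound ((measurable_sphCapDisc N).pow_const 2).aestronglyMeasurable 1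
    (ae_of_all _ fun X => ?_)
  rw [norm_pow, Real.norm_eq_abs, abs_of_nonneg (sphCapDisc_nonneg N X)]
  exact pow_le_one₀ (sphCapDisc_nonneg N X) (sphCapDisc_le_one N X)

lemma integral_capDisc_sq (N : ℕ) (hN : 0 < N) (c : CapParam) :
    ∫ X, capDisc N c X ^ 2 ∂(Measure.pi fun _ : Fin N => sigmaSphere) =
      sigmaSphere.real (cap c.1.1 c.1.2) * (1 - sigmaSphere.real (cap c.1.1 c.1.2)) / N := by
  rw [← integral_sq_empirical_sub_eq _ (measurableSet_cap _ _) hN]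
  congr with X
  simp [capDisc, indicator_apply, cap]

/-- For `N` i.i.d. uniformly distributed points on `S²`,
`E[D(Z_N)²] ≥ 1/(6N)`. -/
theorem expected_sq_capDisc_lower (N : ℕ) (hN : 0 < N) :
    1 / (6 * (N : ℝ)) ≤
      ∫ X, (sphCapDisc N X) ^ 2 ∂(Measure.pi fun _ : Fin N => sigmaSphere) := by
  have hN' : (0 : ℝ) < N := by exact_mod_cast hN
  calc 1 / (6 * (N : ℝ)) ≤ 1 / 2 * (1 - 1 / 2) / N := by
        rw [div_le_div_iff₀ (by positivity) hN']
        linarith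
    _ = ∫ X, capDisc N hemisphere X ^ 2 ∂(Measure.pi fun _ : Fin N => sigmaSphere) := by
        have hhalf : sigmaSphere.real (cap hemisphere.1.1 hemisphere.1.2) = 1 / 2 :=
          sigmaSphere_real_cap_zero (by simp [hemisphere])
        rw [integral_capDisc_sq N hN, hhalf]
    _ ≤ ∫ X, (sphCapDisc N X) ^ 2 ∂(Measure.pi fun _ : Fin N => sigmaSphere) :=
        integral_mono_of_nonneg (ae_of_all _ fun X => sq_nonneg _) (integrable_sphCapDisc_sq N _)
          (ae_of_all _ fun X => pow_le_pow_left₀ (capDisc_nonneg N _ X)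
            (capDisc_le_sphCapDisc N _ X) 2)
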